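/- Let P ∈ ℚ[t]. Then P preserves formal sums of signs if and only if the following three conditions hold: P takes integer values on all integers, ΔP preserves formal sums of signs, and ½Δ(ΔP) preserves formal sums of signs. -/

import Mathlib

open Polynomial

/-- A polynomial `P ∈ ℚ[t]` preserves formal sums of signs if for every `s ≥ 0` there is
a polynomial `Q` with integer coefficients in `s` variables such that
`P(X_1 + ⋯ + X_s) − Q` lies in the ideal generated by the `X_i^3 − X_i`. -/
def PreservesSumsOfSigns (P : Polynomial ℚ) : Prop :=
  ∀ s : ℕ, ∃ Q : MvPolynomial (Fin s) ℤ,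
    Polynomial.aeval (∑ i : Fin s, MvPolynomial.X i) P
        - MvPolynomial.map (Int.castRingHom ℚ) Q ∈
      Ideal.span (Set.range fun i : Fin s => MvPolynomial.X i ^ 3 - MvPolynomial.X i)

/-- The difference operator `ΔP(t) = P(t+1) − P(t)`. -/
noncomputable def deltaOp (P : Polynomial ℚ) : Polynomial ℚ :=
  P.comp (Polynomial.X + 1) - P

/-!
Let `T` be the shift `P ↦ P(X + 1)`, `A = (T - T⁻¹)/2` and `B = (T + T⁻¹)/2 - 1`
(`halfCentralDiff`, `halfSecondDiff`). If `ξ³ = ξ` then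
`P(τ + ξ) = P(τ) + ξ (AP)(τ) + ξ² (BP)(τ)`, since both sides agree at `ξ = 0, ±1`.
Adding the signs one at a time, `P` preserves sums of signs as soon as `(FP)(0) ∈ ℤ` for every
monomial `F` in `A` and `B` (`IsSignIntegral`). Conversely, substituting `X₁ = ±1, 0` in `P(X₁ + ⋯ + X_{s+1}) ≡ Q`
shows that `AP` and `BP` again preserve sums of signs in `s` variables: the halves are harmless
because `Q(1, ·) ≡ Q(-1, ·) mod 2`. Hence `P` preserves sums of signs iff `P(0) ∈ ℤ` and `AP`,
`BP` do. The theorem then follows from identities in `ℚ[T, T⁻¹]`: `T^{±1} = 1 ± A + B`,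
`Δ = A + B` and `Δ²/2 = A² + AB - B` lie in `ℤ[A, B]`, while `A = T⁻¹ (Δ²/2 + Δ)` and
`B = T⁻¹ Δ²/2`.
-/

open LaurentPolynomial (T)
open scoped LaurentPolynomial

namespace SignSums

section ShiftAction

variable {R : Type*} [CommRing R]

noncomputable def taylorMonoidHom : Multiplicative ℤ →* Module.End R R[X] where
  toFun n := taylor ((n.toAdd : ℤ) : R)
  map_one' := by ext; simp
  map_mul' m n := LinearMap.ext fun P => by simp [taylor_taylor]

noncomputable def shiftAct : R[T;T⁻¹] →ₐ[R] Module.End R R[X] :=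
  AddMonoidAlgebra.lift R _ ℤ taylorMonoidHom

theorem shiftAct_T (n : ℤ) (P : R[X]) : shiftAct (T n) P = taylor (n : R) P := by
  rw [shiftAct, LaurentPolynomial.T, AddMonoidAlgebra.lift_single, one_smul]
  rfl

theorem shiftAct_mul_apply (F G : R[T;T⁻¹]) (P : R[X]) :
    shiftAct (F * G) P = shiftAct F (shiftAct G P) := by
  rw [map_mul, Module.End.mul_apply]

theorem shiftAct_C_mul_apply (c : R) (F : R[T;T⁻¹]) (P : R[X]) :
    shiftAct (LaurentPolynomial.C c * F) P = c • shiftAct F P := by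
  rw [shiftAct_mul_apply, LaurentPolynomial.C_eq_algebraMap, AlgHom.commutes,
    Module.algebraMap_end_apply]

theorem aeval_taylor {A : Type*} [CommRing A] [Algebra R A] (x : A) (c : R) (P : R[X]) :
    aeval x (taylor c P) = aeval (x + algebraMap R A c) P := by
  rw [taylor_apply, aeval_comp]
  simp

end ShiftAction

section Operators

noncomputable def halfCentralDiff : ℚ[T;T⁻¹] := LaurentPolynomial.C (1 / 2) * (T 1 - T (-1))

noncomputable def halfSecondDiff : ℚ[T;T⁻¹] := LaurentPolynomial.C (1 / 2) * (T 1 + T (-1)) - 1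

noncomputable def forwardDiff : ℚ[T;T⁻¹] := T 1 - 1

noncomputable def halfForwardDiffSq : ℚ[T;T⁻¹] := LaurentPolynomial.C (1 / 2) * forwardDiff ^ 2

theorem algebraMap_half_mul_two (A : Type*) [Semiring A] [Algebra ℚ A] :
    algebraMap ℚ A (1 / 2) * 2 = 1 := by
  rw [← map_ofNat (algebraMap ℚ A), ← map_mul]
  norm_num

theorem T_one_mul_T_neg_one : (T 1 * T (-1) : ℚ[T;T⁻¹]) = 1 := by
  rw [← LaurentPolynomial.T_add, add_neg_cancel, LaurentPolynomial.T_zero]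

theorem C_half_mul_two : LaurentPolynomial.C (1 / 2 : ℚ) * 2 = 1 := by
  rw [LaurentPolynomial.C_eq_algebraMap, algebraMap_half_mul_two]

theorem T_one_eq : (T 1 : ℚ[T;T⁻¹]) = 1 + halfCentralDiff + halfSecondDiff := by
  unfold halfCentralDiff halfSecondDiff
  linear_combination (-T 1 : ℚ[T;T⁻¹]) * C_half_mul_two

theorem T_neg_one_eq : (T (-1) : ℚ[T;T⁻¹]) = 1 - halfCentralDiff + halfSecondDiff := by
  unfold halfCentralDiff halfSecondDiff
  linear_combination (-T (-1) : ℚ[T;T⁻¹]) * C_half_mul_two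

theorem forwardDiff_eq : forwardDiff = halfCentralDiff + halfSecondDiff := by
  unfold forwardDiff
  linear_combination T_one_eq

theorem halfForwardDiffSq_eq : halfForwardDiffSq =
    halfCentralDiff ^ 2 + halfCentralDiff * halfSecondDiff - halfSecondDiff := by
  unfold halfCentralDiff halfSecondDiff halfForwardDiffSq forwardDiff
  set h := LaurentPolynomial.C (1 / 2 : ℚ)
  linear_combination h * T_one_mul_T_neg_one + (1 + h * T (-1) * T 1 - h * T 1 ^ 2) * C_half_mul_two

theorem halfCentralDiff_eq : halfCentralDiff = T (-1) * (halfForwardDiffSq + forwardDiff) := by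
  unfold halfCentralDiff halfForwardDiffSq forwardDiff
  linear_combination (-(LaurentPolynomial.C (1 / 2 : ℚ) * T 1)) * T_one_mul_T_neg_one +
    (T (-1) * (T 1 - 1)) * C_half_mul_two

theorem halfSecondDiff_eq : halfSecondDiff = T (-1) * halfForwardDiffSq := by
  unfold halfSecondDiff halfForwardDiffSq forwardDiff
  linear_combination (LaurentPolynomial.C (1 / 2 : ℚ) * (2 - T 1)) * T_one_mul_T_neg_one +
    C_half_mul_two

theorem shiftAct_forwardDiff (P : ℚ[X]) : shiftAct forwardDiff P = deltaOp P := by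
  simp [forwardDiff, shiftAct_T, taylor_apply, deltaOp]

theorem shiftAct_halfForwardDiffSq (P : ℚ[X]) :
    shiftAct halfForwardDiffSq P = (1 / 2 : ℚ) • deltaOp (deltaOp P) := by
  rw [halfForwardDiffSq, shiftAct_C_mul_apply, sq, shiftAct_mul_apply, shiftAct_forwardDiff,
    shiftAct_forwardDiff]

variable {A : Type*} [CommRing A] [Algebra ℚ A]

theorem two_mul_aeval_shiftAct_halfCentralDiff (x : A) (P : ℚ[X]) :
    2 * aeval x (shiftAct halfCentralDiff P) = aeval (x + 1) P - aeval (x - 1) P := by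
  rw [halfCentralDiff, shiftAct_C_mul_apply, map_smul, Algebra.smul_def, ← mul_assoc,
    mul_comm 2, algebraMap_half_mul_two, one_mul]
  simp [shiftAct_T, aeval_taylor, sub_eq_add_neg]

theorem two_mul_aeval_shiftAct_halfSecondDiff (x : A) (P : ℚ[X]) :
    2 * aeval x (shiftAct halfSecondDiff P) =
      aeval (x + 1) P + aeval (x - 1) P - 2 * aeval x P := by
  rw [halfSecondDiff, map_sub, LinearMap.sub_apply, shiftAct_C_mul_apply, map_sub, map_smul,
    Algebra.smul_def, mul_sub, ← mul_assoc, mul_comm 2, algebraMap_half_mul_two, one_mul]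
  simp [shiftAct_T, aeval_taylor, sub_eq_add_neg]

end Operators

section Expansion

theorem aeval_mul_eq_aeval_mul {R A : Type*} [CommSemiring R] [CommRing A] [Algebra R A]
    {x y e : A} (h : x * e = y * e) (P : R[X]) : aeval x P * e = aeval y P * e := by
  obtain ⟨c, hc⟩ := sub_dvd_eval_sub x y (P.map (algebraMap R A))
  rw [eval_map_algebraMap, eval_map_algebraMap] at hc
  linear_combination e * hc + c * h

theorem aeval_add_of_pow_three_eq {A : Type*} [CommRing A] [Algebra ℚ A] {ξ : A}
    (hξ : ξ ^ 3 = ξ) (τ : A) (P : ℚ[X]) :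
    aeval (τ + ξ) P = aeval τ P + ξ * aeval τ (shiftAct halfCentralDiff P)
      + ξ ^ 2 * aeval τ (shiftAct halfSecondDiff P) := by
  -- `(τ + ξ) e = (τ + c) e` for `(e, c) = (ξ² + ξ, 1), (ξ² - ξ, -1), (1 - ξ², 0)`
  have hp := aeval_mul_eq_aeval_mul (x := τ + ξ) (y := τ + 1) (e := ξ ^ 2 + ξ)
    (by linear_combination hξ) P
  have hm := aeval_mul_eq_aeval_mul (x := τ + ξ) (y := τ - 1) (e := ξ ^ 2 - ξ)
    (by linear_combination hξ) P
  have hz := aeval_mul_eq_aeval_mul (x := τ + ξ) (y := τ) (e := 1 - ξ ^ 2)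
    (by linear_combination -hξ) P
  have ha := two_mul_aeval_shiftAct_halfCentralDiff τ P
  have hb := two_mul_aeval_shiftAct_halfSecondDiff τ P
  set a := aeval τ (shiftAct halfCentralDiff P)
  set b := aeval τ (shiftAct halfSecondDiff P)
  set h := algebraMap ℚ A (1 / 2)
  linear_combination h * hp + h * hm + hz - h * ξ * ha - h * ξ ^ 2 * hb -
    (aeval (τ + ξ) P * ξ ^ 2 - a * ξ - b * ξ ^ 2 - aeval τ P * ξ ^ 2) * algebraMap_half_mul_two A

end Expansion

section SignIntegral

def IsSignIntegral (P : ℚ[X]) : Prop :=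
  ∀ F ∈ Submonoid.closure {halfCentralDiff, halfSecondDiff}, ∃ k : ℤ, (shiftAct F P).eval 0 = k

theorem IsSignIntegral.eval_zero {P : ℚ[X]} (hP : IsSignIntegral P) : ∃ k : ℤ, P.eval 0 = k := by
  simpa using hP 1 (one_mem _)

theorem IsSignIntegral.of_stable {S : ℚ[X] → Prop}
    (hS : ∀ P, S P → (∃ k : ℤ, P.eval 0 = k) ∧ S (shiftAct halfCentralDiff P) ∧
      S (shiftAct halfSecondDiff P)) {P : ℚ[X]} (hP : S P) : IsSignIntegral P := by
  intro F hF
  induction hF using Submonoid.closure_induction_left generalizing P with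
  | one => simpa using (hS P hP).1
  | mul_left G hG F _ ih =>
    rw [mul_comm, shiftAct_mul_apply]
    rcases hG with rfl | rfl
    exacts [ih (hS P hP).2.1, ih (hS P hP).2.2]

theorem isSignIntegral_zero : IsSignIntegral 0 := fun _ _ => ⟨0, by simp⟩

theorem IsSignIntegral.add {P Q : ℚ[X]} (hP : IsSignIntegral P) (hQ : IsSignIntegral Q) :
    IsSignIntegral (P + Q) := by
  intro F hF
  obtain ⟨k, hk⟩ := hP F hF
  obtain ⟨l, hl⟩ := hQ F hF
  exact ⟨k + l, by simp [hk, hl]⟩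

theorem IsSignIntegral.neg {P : ℚ[X]} (hP : IsSignIntegral P) : IsSignIntegral (-P) := by
  intro F hF
  obtain ⟨k, hk⟩ := hP F hF
  exact ⟨-k, by simp [hk]⟩

theorem IsSignIntegral.shiftAct_of_mem_closure {P : ℚ[X]} (hP : IsSignIntegral P)
    {F : ℚ[T;T⁻¹]} (hF : F ∈ Subring.closure {halfCentralDiff, halfSecondDiff}) :
    IsSignIntegral (shiftAct F P) := by
  induction hF using Subring.closure_induction generalizing P with
  | mem F hF =>
    intro G hG
    rw [← shiftAct_mul_apply]
    exact hP _ (mul_mem hG (Submonoid.subset_closure hF))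
  | zero => simpa using isSignIntegral_zero
  | one => simpa using hP
  | add F G _ _ hF hG => simpa using (hF hP).add (hG hP)
  | neg F _ hF => simpa using (hF hP).neg
  | mul F G _ _ hF hG => simpa [shiftAct_mul_apply] using hF (hG hP)

theorem halfCentralDiff_mem_closure :
    halfCentralDiff ∈ Subring.closure {halfCentralDiff, halfSecondDiff} :=
  Subring.subset_closure (by simp)

theorem halfSecondDiff_mem_closure :
    halfSecondDiff ∈ Subring.closure {halfCentralDiff, halfSecondDiff} :=
  Subring.subset_closure (by simp)

theorem isSignIntegral_iff {P : ℚ[X]} :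
    IsSignIntegral P ↔ (∃ k : ℤ, P.eval 0 = k) ∧ IsSignIntegral (shiftAct halfCentralDiff P) ∧
      IsSignIntegral (shiftAct halfSecondDiff P) := by
  let stable (Q : ℚ[X]) : Prop := (∃ k : ℤ, Q.eval 0 = k) ∧
    IsSignIntegral (shiftAct halfCentralDiff Q) ∧ IsSignIntegral (shiftAct halfSecondDiff Q)
  have h (Q : ℚ[X]) (hQ : IsSignIntegral Q) : stable Q :=
    ⟨hQ.eval_zero, hQ.shiftAct_of_mem_closure halfCentralDiff_mem_closure,
      hQ.shiftAct_of_mem_closure halfSecondDiff_mem_closure⟩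
  exact ⟨h P, IsSignIntegral.of_stable (S := stable) fun Q hQ => ⟨hQ.1, h _ hQ.2.1, h _ hQ.2.2⟩⟩

theorem aeval_sum_mem_of_isSignIntegral {A ι : Type*} [CommRing A] [Algebra ℚ A] (Z : Subring A)
    {ξ : ι → A} (hZ : ∀ i, ξ i ∈ Z) (hξ : ∀ i, ξ i ^ 3 = ξ i) (s : Finset ι) {P : ℚ[X]}
    (hP : IsSignIntegral P) : aeval (∑ i ∈ s, ξ i) P ∈ Z := by
  induction s using Finset.cons_induction generalizing P with
  | empty =>
    obtain ⟨k, hk⟩ := hP.eval_zero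
    rw [Finset.sum_empty, ← coeff_zero_eq_aeval_zero', coeff_zero_eq_eval_zero, hk, map_intCast]
    exact intCast_mem Z k
  | cons j s _ ih =>
    rw [Finset.sum_cons, add_comm, aeval_add_of_pow_three_eq (hξ j)]
    obtain ⟨-, hA, hB⟩ := isSignIntegral_iff.1 hP
    exact add_mem (add_mem (ih hP) (mul_mem (hZ j) (ih hA))) (mul_mem (pow_mem (hZ j) 2) (ih hB))

end SignIntegral

section DeltaCriterion

variable {P : ℚ[X]}

theorem T_one_mem_closure : T 1 ∈ Subring.closure {halfCentralDiff, halfSecondDiff} := by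
  rw [T_one_eq]
  exact add_mem (add_mem (one_mem _) halfCentralDiff_mem_closure) halfSecondDiff_mem_closure

theorem T_neg_one_mem_closure : T (-1) ∈ Subring.closure {halfCentralDiff, halfSecondDiff} := by
  rw [T_neg_one_eq]
  exact add_mem (sub_mem (one_mem _) halfCentralDiff_mem_closure) halfSecondDiff_mem_closure

theorem forwardDiff_mem_closure :
    forwardDiff ∈ Subring.closure {halfCentralDiff, halfSecondDiff} := by
  rw [forwardDiff_eq]
  exact add_mem halfCentralDiff_mem_closure halfSecondDiff_mem_closure

theorem halfForwardDiffSq_mem_closure :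
    halfForwardDiffSq ∈ Subring.closure {halfCentralDiff, halfSecondDiff} := by
  rw [halfForwardDiffSq_eq]
  exact sub_mem (add_mem (pow_mem halfCentralDiff_mem_closure 2)
    (mul_mem halfCentralDiff_mem_closure halfSecondDiff_mem_closure)) halfSecondDiff_mem_closure

theorem IsSignIntegral.eval_intCast (hP : IsSignIntegral P) (m : ℤ) :
    ∃ k : ℤ, P.eval (m : ℚ) = k := by
  induction m using Int.induction_on generalizing P with
  | zero => simpa using hP.eval_zero
  | succ n ih =>
    simpa [shiftAct_T, taylor_eval] using ih (hP.shiftAct_of_mem_closure T_one_mem_closure)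
  | pred n ih =>
    simpa [shiftAct_T, taylor_eval, sub_eq_add_neg] using
      ih (hP.shiftAct_of_mem_closure T_neg_one_mem_closure)

theorem isSignIntegral_iff_delta :
    IsSignIntegral P ↔ (∀ m : ℤ, ∃ k : ℤ, P.eval (m : ℚ) = k) ∧
      IsSignIntegral (deltaOp P) ∧ IsSignIntegral ((1 / 2 : ℚ) • deltaOp (deltaOp P)) := by
  rw [← shiftAct_halfForwardDiffSq, ← shiftAct_forwardDiff]
  refine ⟨fun hP => ⟨hP.eval_intCast, hP.shiftAct_of_mem_closure forwardDiff_mem_closure,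
    hP.shiftAct_of_mem_closure halfForwardDiffSq_mem_closure⟩, fun ⟨hint, hD, hE⟩ => ?_⟩
  refine isSignIntegral_iff.2 ⟨by simpa using hint 0, ?_, ?_⟩
  · rw [halfCentralDiff_eq, shiftAct_mul_apply, map_add, LinearMap.add_apply]
    exact (hE.add hD).shiftAct_of_mem_closure T_neg_one_mem_closure
  · rw [halfSecondDiff_eq, shiftAct_mul_apply]
    exact hE.shiftAct_of_mem_closure T_neg_one_mem_closure

end DeltaCriterion

section SignIdeal

noncomputable def signIdeal (R σ : Type*) [CommRing R] : Ideal (MvPolynomial σ R) :=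
  Ideal.span (Set.range fun i => MvPolynomial.X i ^ 3 - MvPolynomial.X i)

theorem X_pow_three_sub_X_mem_signIdeal {R σ : Type*} [CommRing R] (i : σ) :
    MvPolynomial.X i ^ 3 - MvPolynomial.X i ∈ signIdeal R σ :=
  Ideal.subset_span ⟨i, rfl⟩

theorem signIdeal_le_comap_bind₁ {R σ τ : Type*} [CommRing R] {g : σ → MvPolynomial τ R}
    (hg : ∀ i, g i ^ 3 - g i ∈ signIdeal R τ) :
    signIdeal R σ ≤ (signIdeal R τ).comap (MvPolynomial.bind₁ g) :=
  Ideal.span_le.2 (Set.range_subset_iff.2 fun i => by simpa using hg i)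

theorem exists_sub_map_mem_of_two_mul_sub_map_mem {σ : Type*} {I : Ideal (MvPolynomial σ ℚ)}
    {x : MvPolynomial σ ℚ} {q : MvPolynomial σ ℤ}
    (hq : 2 ∣ q) (h : 2 * x - MvPolynomial.map (Int.castRingHom ℚ) q ∈ I) :
    ∃ Q : MvPolynomial σ ℤ, x - MvPolynomial.map (Int.castRingHom ℚ) Q ∈ I := by
  obtain ⟨Q, rfl⟩ := hq
  refine ⟨Q, ?_⟩
  convert I.mul_mem_left (algebraMap ℚ _ (1 / 2)) h using 1
  rw [map_mul, map_ofNat]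
  linear_combination (MvPolynomial.map (Int.castRingHom ℚ) Q - x) *
    algebraMap_half_mul_two (MvPolynomial σ ℚ)

theorem dvd_aeval_sub_aeval {R S σ : Type*} [CommSemiring R] [CommRing S] [Algebra R S] {d : S}
    {x y : σ → S} (h : ∀ i, d ∣ x i - y i) (p : MvPolynomial σ R) :
    d ∣ MvPolynomial.aeval x p - MvPolynomial.aeval y p := by
  simp_rw [← Ideal.mem_span_singleton, ← Ideal.Quotient.eq] at h ⊢
  have hxy : (Ideal.Quotient.mkₐ R (Ideal.span {d})).comp (MvPolynomial.aeval x) =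
      (Ideal.Quotient.mkₐ R (Ideal.span {d})).comp (MvPolynomial.aeval y) :=
    MvPolynomial.algHom_ext fun i => by simpa using h i
  simpa using congr($hxy p)

noncomputable def evalFirst {s : ℕ} (c : ℤ) :
    MvPolynomial (Fin (s + 1)) ℤ →ₐ[ℤ] MvPolynomial (Fin s) ℤ :=
  MvPolynomial.bind₁ (Fin.cons (MvPolynomial.C c) MvPolynomial.X)

theorem two_dvd_evalFirst_one_sub_evalFirst_neg_one {s : ℕ} (Q : MvPolynomial (Fin (s + 1)) ℤ) :
    2 ∣ evalFirst 1 Q - evalFirst (-1) Q := by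
  refine dvd_aeval_sub_aeval (fun i => ?_) Q
  cases i using Fin.cases with
  | zero => exact ⟨1, by simp; ring⟩
  | succ i => simp

theorem aeval_add_sub_map_evalFirst_mem_signIdeal {P : ℚ[X]} {s : ℕ}
    {Q : MvPolynomial (Fin (s + 1)) ℤ}
    (hQ : aeval (∑ i, MvPolynomial.X i) P - MvPolynomial.map (Int.castRingHom ℚ) Q ∈
      signIdeal ℚ (Fin (s + 1))) {c : ℤ} (hc : c ^ 3 = c) :
    aeval (∑ i, MvPolynomial.X i + (c : MvPolynomial (Fin s) ℚ)) P -
      MvPolynomial.map (Int.castRingHom ℚ) (evalFirst c Q) ∈ signIdeal ℚ (Fin s) := by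
  set g : Fin (s + 1) → MvPolynomial (Fin s) ℤ := Fin.cons (MvPolynomial.C c) MvPolynomial.X
  have hg (i : Fin (s + 1)) : MvPolynomial.map (Int.castRingHom ℚ) (g i) ^ 3 -
      MvPolynomial.map (Int.castRingHom ℚ) (g i) ∈ signIdeal ℚ (Fin s) := by
    cases i using Fin.cases with
    | zero => simp [g, ← Int.cast_pow, hc]
    | succ i => simpa [g] using X_pow_three_sub_X_mem_signIdeal i
  have := signIdeal_le_comap_bind₁ hg hQ
  rw [Ideal.mem_comap, map_sub, ← MvPolynomial.map_bind₁, ← Polynomial.aeval_algHom_apply,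
    map_sum] at this
  simpa [g, evalFirst, Fin.sum_univ_succ, add_comm] using this

end SignIdeal

end SignSums

open SignSums

namespace PreservesSumsOfSigns

variable {P : ℚ[X]}

theorem eval_zero (hP : PreservesSumsOfSigns P) : ∃ k : ℤ, P.eval 0 = k := by
  obtain ⟨Q, hQ⟩ := hP 0
  have h : aeval 0 P = MvPolynomial.map (Int.castRingHom ℚ) Q := by
    simpa [sub_eq_zero] using hQ
  refine ⟨MvPolynomial.constantCoeff Q, ?_⟩
  simpa [← coeff_zero_eq_aeval_zero', coeff_zero_eq_eval_zero] using
    congr(MvPolynomial.constantCoeff $h)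

theorem shiftAct_halfCentralDiff (hP : PreservesSumsOfSigns P) :
    PreservesSumsOfSigns (shiftAct halfCentralDiff P) := by
  intro s
  obtain ⟨Q, hQ⟩ := hP (s + 1)
  have h₁ := aeval_add_sub_map_evalFirst_mem_signIdeal hQ (c := 1) (by norm_num)
  have h₂ := aeval_add_sub_map_evalFirst_mem_signIdeal hQ (c := -1) (by norm_num)
  push_cast [← sub_eq_add_neg] at h₁ h₂
  refine exists_sub_map_mem_of_two_mul_sub_map_mem (I := signIdeal ℚ (Fin s))
    (two_dvd_evalFirst_one_sub_evalFirst_neg_one Q) ?_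
  convert sub_mem h₁ h₂ using 1
  rw [two_mul_aeval_shiftAct_halfCentralDiff, map_sub]
  ring

theorem shiftAct_halfSecondDiff (hP : PreservesSumsOfSigns P) :
    PreservesSumsOfSigns (shiftAct halfSecondDiff P) := by
  intro s
  obtain ⟨Q, hQ⟩ := hP (s + 1)
  have h₁ := aeval_add_sub_map_evalFirst_mem_signIdeal hQ (c := 1) (by norm_num)
  have h₂ := aeval_add_sub_map_evalFirst_mem_signIdeal hQ (c := -1) (by norm_num)
  have h₀ := aeval_add_sub_map_evalFirst_mem_signIdeal hQ (c := 0) (by norm_num)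
  push_cast [← sub_eq_add_neg, add_zero] at h₁ h₂ h₀
  have hq : 2 ∣ evalFirst 1 Q + evalFirst (-1) Q - 2 * evalFirst 0 Q := by
    rw [show evalFirst 1 Q + evalFirst (-1) Q - 2 * evalFirst 0 Q =
      (evalFirst 1 Q - evalFirst (-1) Q) + 2 * (evalFirst (-1) Q - evalFirst 0 Q) by ring]
    exact dvd_add (two_dvd_evalFirst_one_sub_evalFirst_neg_one Q) (dvd_mul_right _ _)
  refine exists_sub_map_mem_of_two_mul_sub_map_mem (I := signIdeal ℚ (Fin s)) hq ?_
  convert sub_mem (add_mem h₁ h₂) ((signIdeal ℚ (Fin s)).mul_mem_left 2 h₀) using 1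
  rw [two_mul_aeval_shiftAct_halfSecondDiff, map_sub, map_add, map_mul, map_ofNat]
  ring

end PreservesSumsOfSigns

theorem preservesSumsOfSigns_of_isSignIntegral {P : ℚ[X]} (hP : IsSignIntegral P) :
    PreservesSumsOfSigns P := by
  intro s
  let π := Ideal.Quotient.mkₐ ℚ (signIdeal ℚ (Fin s))
  obtain ⟨Q, hQ⟩ := aeval_sum_mem_of_isSignIntegral
    ((π : _ →+* _).comp (MvPolynomial.map (Int.castRingHom ℚ))).range
    (ξ := fun i => π (MvPolynomial.X i)) (fun i => ⟨MvPolynomial.X i, by simp⟩)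
    (fun i => by rw [← map_pow]; exact Ideal.Quotient.eq.2 (X_pow_three_sub_X_mem_signIdeal i))
    Finset.univ hP
  refine ⟨Q, Ideal.Quotient.eq.1 ?_⟩
  change π _ = π _
  rw [← Polynomial.aeval_algHom_apply, map_sum]
  exact hQ.symm

theorem preservesSumsOfSigns_iff_isSignIntegral {P : ℚ[X]} :
    PreservesSumsOfSigns P ↔ IsSignIntegral P :=
  ⟨IsSignIntegral.of_stable fun _ hQ =>
      ⟨hQ.eval_zero, hQ.shiftAct_halfCentralDiff, hQ.shiftAct_halfSecondDiff⟩,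
    preservesSumsOfSigns_of_isSignIntegral⟩

theorem preservesSumsOfSigns_iff_delta (P : Polynomial ℚ) :
    PreservesSumsOfSigns P ↔
      ((∀ m : ℤ, ∃ k : ℤ, P.eval (m : ℚ) = (k : ℚ)) ∧
        PreservesSumsOfSigns (deltaOp P) ∧
        PreservesSumsOfSigns ((1 / 2 : ℚ) • deltaOp (deltaOp P))) := by
  simp only [preservesSumsOfSigns_iff_isSignIntegral]
  exact isSignIntegral_iff_delta
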